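/- arXiv:2207.12243 — 7 statements merged into one kernel-verified Lean document; each statement's English description precedes it below -/
import Mathlib

section
/- For every natural number n, the k-Mersenne number satisfies the Binet formula M_{k,n} = (λ₁ⁿ − λ₂ⁿ)/(λ₁ − λ₂), where λ₁, λ₂ are the two roots of λ² − 3kλ + 2 = 0. -/
/-! By Vieta, `λ₁ + λ₂ = 3k` and `λ₁λ₂ = 2`, so `M_k` is the Lucas sequence `U(λ₁ + λ₂, λ₁λ₂)`;
for any such sequence `(λ₁ - λ₂) Uₙ = λ₁ⁿ - λ₂ⁿ` by a two-step induction, and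
`λ₁ - λ₂ = √(9k² - 8)` is nonzero. -/

noncomputable def M (k : ℝ) : ℕ → ℝ
  | 0 => 0
  | 1 => 1
  | (n+2) => 3*k * M k (n+1) - 2 * M k n

theorem sub_mul_eq_pow_sub_pow_of_lucas {R : Type*} [CommRing R] (a b : R) (u : ℕ → R)
    (h0 : u 0 = 0) (h1 : u 1 = 1) (hrec : ∀ n, u (n + 2) = (a + b) * u (n + 1) - a * b * u n) :
    ∀ n, (a - b) * u n = a ^ n - b ^ n := by
  have hpair : ∀ n, (a - b) * u n = a ^ n - b ^ n ∧ (a - b) * u (n + 1) = a ^ (n + 1) - b ^ (n + 1) := by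
    intro n
    induction n with
    | zero => simp [h0, h1]
    | succ n ih =>
      refine ⟨ih.2, ?_⟩
      calc (a - b) * u (n + 2)
          = (a + b) * ((a - b) * u (n + 1)) - a * b * ((a - b) * u n) := by rw [hrec]; ring
        _ = a ^ (n + 2) - b ^ (n + 2) := by rw [ih.1, ih.2]; ring
  exact fun n => (hpair n).1

theorem eq_pow_sub_pow_div_of_lucas {K : Type*} [Field K] {a b : K} (hab : a ≠ b) (u : ℕ → K)
    (h0 : u 0 = 0) (h1 : u 1 = 1) (hrec : ∀ n, u (n + 2) = (a + b) * u (n + 1) - a * b * u n)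
    (n : ℕ) : u n = (a ^ n - b ^ n) / (a - b) := by
  rw [eq_div_iff (sub_ne_zero.mpr hab), mul_comm]
  exact sub_mul_eq_pow_sub_pow_of_lucas a b u h0 h1 hrec n

theorem kMersenne_binet (k : ℝ) (hk : 9*k^2 > 8)
    (lam1 lam2 : ℝ)
    (h1 : lam1 = (3*k + Real.sqrt (9*k^2 - 8))/2)
    (h2 : lam2 = (3*k - Real.sqrt (9*k^2 - 8))/2) :
    ∀ n : ℕ, M k n = (lam1^n - lam2^n)/(lam1 - lam2) := by
  have hsq : Real.sqrt (9*k^2 - 8) ^ 2 = 9*k^2 - 8 := Real.sq_sqrt (by linarith)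
  have hne : lam1 ≠ lam2 := by
    have hpos : 0 < Real.sqrt (9*k^2 - 8) := Real.sqrt_pos.mpr (by linarith)
    intro h
    rw [h1, h2] at h
    linarith
  have hsum : lam1 + lam2 = 3*k := by rw [h1, h2]; ring
  have hprod : lam1 * lam2 = 2 := by rw [h1, h2]; linear_combination (-1/4 : ℝ) * hsq
  refine eq_pow_sub_pow_div_of_lucas hne (M k) rfl rfl fun n => ?_
  rw [hsum, hprod]
  rfl
end

section
/- (Catalan's identity for k-Mersenne numbers) For natural numbers n ≥ r, M_{k,n+r}·M_{k,n−r} − M_{k,n}² = −2^{n−r}·M_{k,r}². -/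
lemma M_zero (k : ℝ) : M k 0 = 0 := rfl
lemma M_one (k : ℝ) : M k 1 = 1 := rfl
lemma M_rec (k : ℝ) (n : ℕ) : M k (n+2) = 3*k * M k (n+1) - 2 * M k n := rfl

lemma M_add (k : ℝ) (b a : ℕ) :
    M k (a+b+1) = M k (a+1) * M k (b+1) - 2 * M k a * M k b := by
  induction b using Nat.twoStepInduction generalizing a with
  | zero => simp [M_one, M_zero]
  | one => simp [show (1:ℕ)+1 = 2 from rfl, M_rec, M_one, M_zero]; ring
  | more b ih1 ih2 =>
    have h1 := ih1 a
    have h2 := ih2 a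
    have e1 : a + (b+2) + 1 = (a + b + 1) + 2 := by ring
    have e2 : a + b + 1 + 1 = a + (b+1) + 1 := by ring
    have e3 : b + 2 + 1 = (b+1) + 2 := by ring
    rw [e1, M_rec, e2, h2, h1, e3, M_rec k (b+1), M_rec k b]
    ring

lemma M_wron (k : ℝ) (s j : ℕ) :
    M k (j+s+1) * M k j - M k (j+s) * M k (j+1) = -(2^j * M k s) := by
  induction j with
  | zero => simp [M_zero, M_one]
  | succ j ih =>
    have e1 : j + 1 + s + 1 = (j + s) + 2 := by ring
    have e2 : j + 1 + s = (j + s) + 1 := by ring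
    rw [e1, e2, M_rec k (j+s), M_rec k j]
    have : (3*k * M k (j+s+1) - 2 * M k (j+s)) * M k (j+1) -
        M k (j+s+1) * (3*k * M k (j+1) - 2 * M k j) =
        2 * (M k (j+s+1) * M k j - M k (j+s) * M k (j+1)) := by ring
    rw [this, ih]
    ring

theorem kMersenne_catalan (k : ℝ) (n r : ℕ) (h : r ≤ n) :
    M k (n+r) * M k (n-r) - (M k n)^2 = -(2^(n-r) * (M k r)^2) := by
  obtain ⟨d, rfl⟩ := Nat.exists_eq_add_of_le h
  have hsub : r + d - r = d := by omega
  rw [hsub]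
  cases d with
  | zero => simp [M_zero]
  | succ d =>
    have e1 : r + (d+1) + r = (d + r) + r + 1 := by ring
    have e2 : r + (d+1) = d + r + 1 := by ring
    rw [e1, e2, M_add k r (d+r), M_add k r d]
    have hw := M_wron k r d
    rw [M_add k r d] at hw
    linear_combination 2 * M k r * hw
end

section
/- (d'Ocagne's identity for k-Mersenne numbers) For all natural numbers n and r, M_{k,r}·M_{k,n+1} − M_{k,r+1}·M_{k,n} = 2ⁿ·M_{k,r−n} when r ≥ n; equivalently, expressed via the Binet roots, M_{k,r}·M_{k,n+1} − M_{k,r+1}·M_{k,n} = (λ₁^r·λ₂^n − λ₁^n·λ₂^r)/(λ₁ − λ₂). -/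
lemma binet_aux (k : ℝ) (a b : ℝ) (ha : a^2 = 3*k*a - 2) (hb : b^2 = 3*k*b - 2) :
    ∀ n : ℕ, M k n * (a - b) = a^n - b^n := by
  intro n
  induction n using Nat.twoStepInduction with
  | zero => simp [M]
  | one => simp [M]
  | more n ih1 ih2 =>
    have : M k (n+2) = 3*k * M k (n+1) - 2 * M k n := rfl
    rw [this]
    linear_combination (3*k) * ih2 - 2 * ih1 - a^n * ha + b^n * hb

theorem kMersenne_docagne (k : ℝ) (hk : 9*k^2 > 8)
    (lam1 lam2 : ℝ)
    (h1 : lam1 = (3*k + Real.sqrt (9*k^2 - 8))/2)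
    (h2 : lam2 = (3*k - Real.sqrt (9*k^2 - 8))/2)
    (n r : ℕ) :
    (n ≤ r → M k r * M k (n+1) - M k (r+1) * M k n = 2^n * M k (r-n)) ∧
    M k r * M k (n+1) - M k (r+1) * M k n
      = (lam1^r * lam2^n - lam1^n * lam2^r)/(lam1 - lam2) := by
  have hpos : (0:ℝ) < 9*k^2 - 8 := by linarith
  have hs : Real.sqrt (9*k^2 - 8) ^ 2 = 9*k^2 - 8 := Real.sq_sqrt hpos.le
  have hspos : 0 < Real.sqrt (9*k^2 - 8) := Real.sqrt_pos.mpr hpos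
  have hd : lam1 - lam2 = Real.sqrt (9*k^2 - 8) := by rw [h1, h2]; ring
  have hdne : lam1 - lam2 ≠ 0 := by rw [hd]; exact hspos.ne'
  have ha : lam1^2 = 3*k*lam1 - 2 := by rw [h1]; nlinarith [hs]
  have hb : lam2^2 = 3*k*lam2 - 2 := by rw [h2]; nlinarith [hs]
  have hprod : lam1 * lam2 = 2 := by rw [h1, h2]; nlinarith [hs]
  have B := binet_aux k lam1 lam2 ha hb
  have key : M k r * M k (n+1) - M k (r+1) * M k n
      = (lam1^r * lam2^n - lam1^n * lam2^r)/(lam1 - lam2) := by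
    rw [eq_div_iff hdne]
    apply mul_right_cancel₀ hdne
    have rhs : (lam1^r - lam2^r) * (lam1^(n+1) - lam2^(n+1))
          - (lam1^(r+1) - lam2^(r+1)) * (lam1^n - lam2^n)
        = (lam1^r * lam2^n - lam1^n * lam2^r) * (lam1 - lam2) := by
      simp only [pow_succ]; ring
    linear_combination (M k (n+1) * (lam1 - lam2)) * B r + (lam1^r - lam2^r) * B (n+1)
      - (M k n * (lam1 - lam2)) * B (r+1) - (lam1^(r+1) - lam2^(r+1)) * B n + rhs
  refine ⟨?_, key⟩
  intro hnr
  obtain ⟨m, rfl⟩ := Nat.exists_eq_add_of_le hnr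
  have hm : n + m - n = m := by omega
  rw [key, hm, eq_comm, eq_div_iff hdne]
  have hp : (lam1*lam2)^n = 2^n := by rw [hprod]
  linear_combination (2:ℝ)^n * B m - (lam1^m - lam2^m) * hp
end

section
/- (Vajda's identity for k-Mersenne numbers) For all natural numbers n, i, j: M_{k,n+i}·M_{k,n+j} − M_{k,n}·M_{k,n+i+j} = 2ⁿ·M_{k,i}·M_{k,j}. -/
lemma M_step (k : ℝ) (m : ℕ) : M k (m+2) = 3*k * M k (m+1) - 2 * M k m := rfl

lemma dOcagne (k : ℝ) (i n : ℕ) :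
    M k (n+i) * M k (n+1) - M k n * M k (n+i+1) = 2^n * M k i := by
  induction n with
  | zero => simp [M]
  | succ n ih =>
    have e1 : n + 1 + i = (n + i) + 1 := by ring
    rw [e1, M_step k n, M_step k (n+i)]
    rw [show n + i + 1 = (n+i)+1 from rfl] at ih
    linear_combination 2 * ih

theorem kMersenne_vajda (k : ℝ) (n i j : ℕ) :
    M k (n+i) * M k (n+j) - M k n * M k (n+i+j) = 2^n * M k i * M k j := by
  induction j using Nat.twoStepInduction with
  | zero => simp [M]; ring
  | one =>
    have := dOcagne k i n
    simp only [M, Nat.add_zero] at *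
    linear_combination this
  | more j ih1 ih2 =>
    have e1 : n + (j+2) = (n+j) + 2 := by ring
    have e2 : n + i + (j+2) = (n+i+j) + 2 := by ring
    rw [e1, e2, M_step, M_step, M_step]
    rw [show n + (j+1) = (n+j)+1 from by ring, show n + i + (j+1) = (n+i+j)+1 from by ring] at ih2
    linear_combination 3*k*ih2 - 2*ih1
end

section
/- (Vajda's identity for k-Mersenne-Lucas numbers) For all natural numbers n, i, j: m_{k,n+i}·m_{k,n+j} − m_{k,n}·m_{k,n+i+j} = −2ⁿ·(9k²−8)·M_{k,i}·M_{k,j}. -/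
noncomputable def m (k : ℝ) : ℕ → ℝ
  | 0 => 2
  | 1 => 3*k
  | (n+2) => 3*k * m k (n+1) - 2 * m k n

lemma cassini (k : ℝ) (n : ℕ) :
    m k (n+1) * m k (n+1) - m k n * m k (n+2) = -(2^n * (9*k^2 - 8)) := by
  induction n with
  | zero => simp [m]; ring
  | succ n ih =>
    have h3 : m k (n+3) = 3*k * m k (n+2) - 2 * m k (n+1) := by
      have : n + 3 = (n+1) + 2 := by omega
      rw [this]; rfl
    have h2 : m k (n+2) = 3*k * m k (n+1) - 2 * m k n := rfl
    have : (2:ℝ)^(n+1) = 2 * 2^n := by ring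
    rw [show n+1+1 = n+2 from rfl, show n+1+2 = n+3 from rfl, h3, this]
    linear_combination 2*ih + m k (n+2) * h2

lemma catalan_like (k : ℝ) (n j : ℕ) :
    m k (n+1) * m k (n+j) - m k n * m k (n+j+1) = -(2^n * (9*k^2 - 8) * M k j) := by
  induction j using Nat.twoStepInduction with
  | zero => simp [M]; ring
  | one =>
    have := cassini k n
    simp only [M]
    rw [show n+1+1 = n+2 from rfl] at this ⊢
    linarith [this]
  | more j ih1 ih2 =>
    have hM : M k (j+2) = 3*k * M k (j+1) - 2 * M k j := rfl
    have h1 : m k (n+j+2) = 3*k * m k (n+j+1) - 2 * m k (n+j) := rfl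
    have h2 : m k (n+j+3) = 3*k * m k (n+j+2) - 2 * m k (n+j+1) := rfl
    rw [show n+(j+1) = n+j+1 from by omega] at ih2
    rw [show n+j+1+1 = n+j+2 from by omega] at ih2
    rw [show n+(j+2) = n+j+2 from by omega, show n+j+2+1 = n+j+3 from by omega,
        h1, h2, hM]
    linear_combination 3*k*ih2 - 2*ih1

theorem kMersenneLucas_vajda (k : ℝ) (n i j : ℕ) :
    m k (n+i) * m k (n+j) - m k n * m k (n+i+j)
      = -(2^n * (9*k^2 - 8) * M k i * M k j) := by
  induction i using Nat.twoStepInduction with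
  | zero => simp [M]
  | one =>
    have := catalan_like k n j
    simp only [M]
    have e : n + 1 + j = n + j + 1 := by omega
    rw [e]
    linarith [this]
  | more i ih1 ih2 =>
    have hM : M k (i+2) = 3*k * M k (i+1) - 2 * M k i := rfl
    have h1 : m k (n+(i+2)) = 3*k * m k (n+(i+1)) - 2 * m k (n+i) := by
      have e1 : n + (i+2) = (n+i) + 2 := by omega
      have e2 : n + (i+1) = (n+i) + 1 := by omega
      rw [e1, e2]; rfl
    have h2 : m k (n+(i+2)+j) = 3*k * m k (n+(i+1)+j) - 2 * m k (n+i+j) := by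
      have e1 : n + (i+2) + j = (n+i+j) + 2 := by omega
      have e2 : n + (i+1) + j = (n+i+j) + 1 := by omega
      rw [e1, e2]; rfl
    rw [h1, h2, hM]
    linear_combination 3*k*ih2 - 2*ih1
end

section
/- (Squared norm of the k-Mersenne octonion) For every natural number n, (9k²−8)·∑_{r=0}^{7} M_{k,n+r}² = λ₁^{2n}·∑_{r=0}^{7} λ₁^{2r} + λ₂^{2n}·∑_{r=0}^{7} λ₂^{2r} − 255·2^{n+1}, where λ₁, λ₂ are the roots of λ² − 3kλ + 2 = 0. -/
/-!
Any two roots `a, b` of `x² - 3kx + 2` give the Binet formula `(a - b) M_{k,n} = aⁿ - bⁿ`.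
Squaring it and using `ab = 2` turns each term into `a^{2m} + b^{2m} - 2·2^m`, and summing
over eight consecutive indices gives the geometric sum `2ⁿ (2⁸ - 1)` in the last term.
-/

section Binet

variable {k a b : ℝ} (hsum : a + b = 3 * k) (hprod : a * b = 2)
include hsum hprod

theorem sub_mul_M_eq_pow_sub_pow : ∀ n, (a - b) * M k n = a ^ n - b ^ n
  | 0 => by simp [M]
  | 1 => by simp [M]
  | n + 2 => by
    have ih₁ := sub_mul_M_eq_pow_sub_pow (n + 1)
    have ih₀ := sub_mul_M_eq_pow_sub_pow n
    simp only [M]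
    linear_combination 3 * k * ih₁ - 2 * ih₀ - (a ^ (n + 1) - b ^ (n + 1)) * hsum
      + (a ^ n - b ^ n) * hprod

theorem sq_sub_mul_M_sq (n : ℕ) :
    (a - b) ^ 2 * M k n ^ 2 = a ^ (2 * n) + b ^ (2 * n) - 2 * 2 ^ n := by
  have hab : (2 : ℝ) ^ n = a ^ n * b ^ n := by rw [← mul_pow, hprod]
  rw [← mul_pow, sub_mul_M_eq_pow_sub_pow hsum hprod, hab, pow_mul', pow_mul']
  ring

theorem sq_sub_mul_sum_M_sq (n N : ℕ) :
    (a - b) ^ 2 * ∑ r ∈ Finset.range N, M k (n + r) ^ 2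
      = a ^ (2 * n) * ∑ r ∈ Finset.range N, a ^ (2 * r)
        + b ^ (2 * n) * ∑ r ∈ Finset.range N, b ^ (2 * r)
        - (2 ^ N - 1) * 2 ^ (n + 1) := by
  have hgeom : (∑ r ∈ Finset.range N, (2 : ℝ) ^ r) = 2 ^ N - 1 := by
    linear_combination geom_sum_mul (2 : ℝ) N
  simp only [Finset.mul_sum, sq_sub_mul_M_sq hsum hprod, ← hgeom, Finset.sum_mul,
    ← Finset.sum_add_distrib, ← Finset.sum_sub_distrib, mul_add, pow_add]
  refine Finset.sum_congr rfl fun r _ => ?_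
  ring

end Binet

theorem kMersenne_oct_norm (k : ℝ) (hk : 9*k^2 > 8)
    (lam1 lam2 : ℝ)
    (h1 : lam1 = (3*k + Real.sqrt (9*k^2 - 8))/2)
    (h2 : lam2 = (3*k - Real.sqrt (9*k^2 - 8))/2)
    (n : ℕ) :
    (9*k^2 - 8) * ∑ r ∈ Finset.range 8, (M k (n+r))^2
      = lam1^(2*n) * ∑ r ∈ Finset.range 8, lam1^(2*r)
        + lam2^(2*n) * ∑ r ∈ Finset.range 8, lam2^(2*r)
        - 255 * 2^(n+1) := by
  have hsqrt : Real.sqrt (9*k^2 - 8) ^ 2 = 9*k^2 - 8 := Real.sq_sqrt (by linarith)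
  have hsum : lam1 + lam2 = 3*k := by rw [h1, h2]; ring
  have hprod : lam1 * lam2 = 2 := by rw [h1, h2]; linear_combination -hsqrt / 4
  have hdisc : (lam1 - lam2) ^ 2 = 9*k^2 - 8 := by rw [h1, h2]; linear_combination hsqrt
  rw [← hdisc, sq_sub_mul_sum_M_sq hsum hprod]
  norm_num
end

section
/- (Mixed identity) For all natural numbers n, the product of roots identity implies m_{k,n}² − (9k²−8)·M_{k,n}² = 2^{n+2}, i.e., the k-Mersenne and k-Mersenne-Lucas numbers satisfy m_{k,n}² − (9k²−8)·M_{k,n}² = 4·2ⁿ. -/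
lemma aux (k : ℝ) (n : ℕ) :
    (m k n)^2 - (9*k^2 - 8) * (M k n)^2 = 4 * 2^n ∧
    m k (n+1) * m k n - (9*k^2 - 8) * (M k (n+1) * M k n) = 6*k * 2^n ∧
    (m k (n+1))^2 - (9*k^2 - 8) * (M k (n+1))^2 = 8 * 2^n := by
  induction n with
  | zero => refine ⟨?_, ?_, ?_⟩ <;> simp [M, m] <;> ring
  | succ n ih =>
    obtain ⟨h1, h2, h3⟩ := ih
    refine ⟨?_, ?_, ?_⟩
    · linear_combination h3
    · show m k (n+2) * m k (n+1) - (9*k^2 - 8) * (M k (n+2) * M k (n+1)) = 6*k * 2^(n+1)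
      show (3*k * m k (n+1) - 2 * m k n) * m k (n+1) -
        (9*k^2 - 8) * ((3*k * M k (n+1) - 2 * M k n) * M k (n+1)) = 6*k * 2^(n+1)
      linear_combination 3*k*h3 - 2*h2
    · show (3*k * m k (n+1) - 2 * m k n)^2 -
        (9*k^2 - 8) * (3*k * M k (n+1) - 2 * M k n)^2 = 8 * 2^(n+1)
      linear_combination 9*k^2*h3 + 4*h1 - 12*k*h2

theorem mixed_identity (k : ℝ) (n : ℕ) :
    (m k n)^2 - (9*k^2 - 8) * (M k n)^2 = 4 * 2^n := (aux k n).1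
end
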